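/- Infinitesimal removability implies removability (abstract algebraic version): let D be a derivation on an associative algebra commuting with d/dλ, let α(λ) and Q(λ) be smooth matrix-valued curves with α'(λ) = D(Q(λ)) − [α(λ), Q(λ)], and let S(λ) solve S' = Q·S, S(λ₀) = 1. Then Z(λ) := D(S(λ)) + S(λ)·α(λ₀) − α(λ)·S(λ) satisfies Z'(λ) = Q(λ)·Z(λ) and Z(λ₀) = 0; consequently Z(λ) = 0 for all λ, i.e. α(λ₀)^{S(λ)} = α(λ). -/

import Mathlib

/-!
Differentiating `Z = D S + S α(λ₀) - α S`, with `(D S)' = D (Q S) = (D Q) S + Q (D S)` and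
`α' = D Q - [α, Q]`, every term not of the form `Q Z` cancels, so `Z' = Q Z`. A derivation kills
`1 = S λ₀`, hence `Z λ₀ = 0`, and uniqueness for linear ODEs with continuous coefficients
(Lipschitz with a uniform constant on each compact interval) gives `Z ≡ 0`.
-/

open Set
open scoped Matrix.Norms.Operator

theorem Matrix.hasDerivAt_iff_hasDerivAt_apply {m n E : Type*} [Fintype m] [Fintype n]
    [NormedAddCommGroup E] [NormedSpace ℝ E] {Z : ℝ → Matrix m n E} {Z' : Matrix m n E} {x : ℝ} :
    HasDerivAt Z Z' x ↔ ∀ i j, HasDerivAt (fun t => Z t i j) (Z' i j) x :=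
  (hasDerivAt_pi (E' := fun _ : m => n → E)).trans (forall_congr' fun _ => hasDerivAt_pi)

theorem map_one_eq_zero_of_leibniz {R : Type*} [NonAssocRing R] (D : R → R)
    (hD : ∀ f g, D (f * g) = D f * g + f * D g) : D 1 = 0 := by
  simpa using hD 1 1

section NormedRing

variable {𝔸 : Type*} [NormedRing 𝔸] [NormedAlgebra ℝ 𝔸]

theorem eq_zero_of_hasDerivAt_mul_left {Q Z : ℝ → 𝔸} {t₀ : ℝ} (hQ : Continuous Q)
    (hZ : ∀ t, HasDerivAt Z (Q t * Z t) t) (hZ₀ : Z t₀ = 0) (t : ℝ) : Z t = 0 := by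
  set a := min t t₀ - 1
  set b := max t t₀ + 1
  obtain ⟨K, hK⟩ := ((isCompact_Icc (a := a) (b := b)).image_of_continuousOn
    (continuous_nnnorm.comp hQ).continuousOn).bddAbove
  have hlip : ∀ s ∈ Ioo a b, LipschitzOnWith K (Q s * ·) univ := fun s hs =>
    ((lipschitzWith_smul (Q s)).weaken (hK ⟨s, Ioo_subset_Icc_self hs, rfl⟩)).lipschitzOnWith
  have ht : t ∈ Ioo a b := ⟨by linarith [min_le_left t t₀], by linarith [le_max_left t t₀]⟩
  have ht₀ : t₀ ∈ Ioo a b := ⟨by linarith [min_le_right t t₀], by linarith [le_max_right t t₀]⟩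
  exact ODE_solution_unique_of_mem_Ioo (g := 0) hlip ht₀ (fun s _ => ⟨hZ s, trivial⟩)
    (fun s _ => ⟨by simp, trivial⟩) hZ₀ ht

/-- `DS` stands for `D S`; `gaugeDefect DS S α t₀ t = 0` says that `α t` is the gauge transform
`α(t₀)^{S(t)}` of `α t₀`. -/
def gaugeDefect (DS S α : ℝ → 𝔸) (t₀ t : ℝ) : 𝔸 :=
  DS t + S t * α t₀ - α t * S t

theorem hasDerivAt_gaugeDefect {DS DQ S α Q : ℝ → 𝔸} {αd : 𝔸} {t₀ x : ℝ}
    (hS : HasDerivAt S (Q x * S x) x) (hDS : HasDerivAt DS (DQ x * S x + Q x * DS x) x)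
    (hα : HasDerivAt α αd x) (hαd : αd = DQ x - (α x * Q x - Q x * α x)) :
    HasDerivAt (gaugeDefect DS S α t₀) (Q x * gaugeDefect DS S α t₀ x) x := by
  refine ((hDS.add (hS.mul_const (α t₀))).sub (hα.mul hS)).congr_deriv ?_
  rw [gaugeDefect, hαd]
  noncomm_ring

end NormedRing

theorem stmt4_general {n : ℕ}
    (D : (ℝ → Matrix (Fin n) (Fin n) ℂ) → (ℝ → Matrix (Fin n) (Fin n) ℂ))
    (hDLeib : ∀ f g, D (f * g) = D f * g + f * D g)
    (hDpt : ∀ (f g : ℝ → Matrix (Fin n) (Fin n) ℂ) (x : ℝ),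
      f x = g x → D f x = D g x)
    (hDderiv : ∀ f g : ℝ → Matrix (Fin n) (Fin n) ℂ,
      (∀ (x : ℝ) (i j : Fin n), HasDerivAt (fun t => f t i j) (g x i j) x) →
      ∀ (x : ℝ) (i j : Fin n), HasDerivAt (fun t => D f t i j) (D g x i j) x)
    (α αd Q S : ℝ → Matrix (Fin n) (Fin n) ℂ) (lam₀ : ℝ)
    (hQcont : ∀ i j : Fin n, Continuous fun t => Q t i j)
    (hα : ∀ (x : ℝ) (i j : Fin n), HasDerivAt (fun t => α t i j) (αd x i j) x)
    (hinf : ∀ x : ℝ, αd x = D Q x - (α x * Q x - Q x * α x))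
    (hS : ∀ (x : ℝ) (i j : Fin n),
      HasDerivAt (fun t => S t i j) ((Q x * S x) i j) x)
    (hS0 : S lam₀ = 1) :
    (∀ (x : ℝ) (i j : Fin n),
        HasDerivAt (fun t => (D S t + S t * α lam₀ - α t * S t) i j)
          ((Q x * (D S x + S x * α lam₀ - α x * S x)) i j) x) ∧
      D S lam₀ + S lam₀ * α lam₀ - α lam₀ * S lam₀ = 0 ∧
      (∀ x : ℝ, D S x + S x * α lam₀ - α x * S x = 0) := by
  have hDS (x : ℝ) : HasDerivAt (D S) (D Q x * S x + Q x * D S x) x := by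
    have h := Matrix.hasDerivAt_iff_hasDerivAt_apply.2 (hDderiv S (Q * S) hS x)
    rwa [hDLeib] at h
  have hZ (x : ℝ) :
      HasDerivAt (gaugeDefect (D S) S α lam₀) (Q x * gaugeDefect (D S) S α lam₀ x) x :=
    hasDerivAt_gaugeDefect (Matrix.hasDerivAt_iff_hasDerivAt_apply.2 (hS x)) (hDS x)
      (Matrix.hasDerivAt_iff_hasDerivAt_apply.2 (hα x)) (hinf x)
  have hZ₀ : gaugeDefect (D S) S α lam₀ lam₀ = 0 := by
    rw [gaugeDefect, hDpt S 1 lam₀ hS0, map_one_eq_zero_of_leibniz D hDLeib, hS0]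
    simp
  exact ⟨fun x => Matrix.hasDerivAt_iff_hasDerivAt_apply.1 (hZ x), hZ₀,
    eq_zero_of_hasDerivAt_mul_left (continuous_matrix hQcont) hZ hZ₀⟩

/-- Infinitesimal removability implies removability. `D` is a derivation acting
pointwise in `λ` on matrix-valued curves (the abstract stand-in for `d_h`),
commuting with `d/dλ` (derivatives in `λ` are taken entrywise). If
`α'(λ) = D(Q)(λ) − [α λ, Q λ]` and `S' = Q·S` with `S λ₀ = 1`, then
`Z := D S + S·α(λ₀) − α·S` satisfies `Z' = Q·Z`, `Z λ₀ = 0`, and hence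
`Z ≡ 0`, i.e. `α(λ₀)^{S(λ)} = α(λ)`. -/
theorem stmt4 {n : ℕ}
    (D : (ℝ → Matrix (Fin n) (Fin n) ℂ) → (ℝ → Matrix (Fin n) (Fin n) ℂ))
    (hDadd : ∀ f g, D (f + g) = D f + D g)
    (hDLeib : ∀ f g, D (f * g) = D f * g + f * D g)
    (hDpt : ∀ (f g : ℝ → Matrix (Fin n) (Fin n) ℂ) (x : ℝ),
      f x = g x → D f x = D g x)
    (hDderiv : ∀ f g : ℝ → Matrix (Fin n) (Fin n) ℂ,
      (∀ (x : ℝ) (i j : Fin n), HasDerivAt (fun t => f t i j) (g x i j) x) →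
      ∀ (x : ℝ) (i j : Fin n), HasDerivAt (fun t => D f t i j) (D g x i j) x)
    (α αd Q S : ℝ → Matrix (Fin n) (Fin n) ℂ) (lam₀ : ℝ)
    (hQcont : ∀ i j : Fin n, Continuous fun t => Q t i j)
    (hα : ∀ (x : ℝ) (i j : Fin n), HasDerivAt (fun t => α t i j) (αd x i j) x)
    (hinf : ∀ x : ℝ, αd x = D Q x - (α x * Q x - Q x * α x))
    (hS : ∀ (x : ℝ) (i j : Fin n),
      HasDerivAt (fun t => S t i j) ((Q x * S x) i j) x)
    (hS0 : S lam₀ = 1) :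
    (∀ (x : ℝ) (i j : Fin n),
        HasDerivAt (fun t => (D S t + S t * α lam₀ - α t * S t) i j)
          ((Q x * (D S x + S x * α lam₀ - α x * S x)) i j) x) ∧
      D S lam₀ + S lam₀ * α lam₀ - α lam₀ * S lam₀ = 0 ∧
      (∀ x : ℝ, D S x + S x * α lam₀ - α x * S x = 0) :=
  stmt4_general D hDLeib hDpt hDderiv α αd Q S lam₀ hQcont hα hinf hS hS0
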